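/- Every nonzero series b in K((ℝ≤0)) has a unique normal form: there exist unique n ≥ 1, real numbers x₁ ≤ … ≤ xₙ ≤ 0 and series b₁, …, bₙ ∈ K((ℝ≤0)) such that each bᵢ is principal, ot(b₁) ≥ … ≥ ot(bₙ), every element of xᵢ + supp(bᵢ) is strictly less than every element of x_{i+1} + supp(b_{i+1}) for i = 1, …, n−1, and b = b₁t^{x₁} + … + bₙt^{xₙ}. -/

import Mathlib

open Ordinal

/-- The ordinal order type of a well-ordered subset of a linear order. -/
noncomputable def orderTypeSet {Γ : Type*} [LinearOrder Γ] (s : Set Γ) (hs : s.IsWF) : Ordinal :=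
  letI : IsWellFounded s (· < ·) := ⟨hs⟩
  Ordinal.type ((· < ·) : s → s → Prop)

/-- The order type `ot b` of the support of a Hahn series. -/
noncomputable def HahnSeries.ot {Γ : Type*} [LinearOrder Γ] {R : Type*} [Zero R]
    (b : HahnSeries Γ R) : Ordinal :=
  orderTypeSet b.support b.isWF_support

/-- The degree of a Hahn series: the largest ordinal `β` with `ω ^ β ≤ ot b`
(for a nonzero series), implemented as the base-`ω` ordinal logarithm of `ot b`. -/
noncomputable def HahnSeries.deg {Γ : Type*} [LinearOrder Γ] {R : Type*} [Zero R]
    (b : HahnSeries Γ R) : Ordinal :=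
  Ordinal.log Ordinal.omega0 b.ot

/-- A nonzero series is weakly principal if its order type is `ω ^ α` for some ordinal `α`. -/
def weaklyPrincipal {Γ : Type*} [LinearOrder Γ] {R : Type*} [Zero R]
    (b : HahnSeries Γ R) : Prop :=
  ∃ α : Ordinal, b.ot = Ordinal.omega0 ^ α

/-- A series in `K((ℝ≤0))` is principal if it is weakly principal and the
supremum of its support is `0`. -/
def principalSeries {R : Type*} [Zero R] (b : HahnSeries ℝ R) : Prop :=
  weaklyPrincipal b ∧ sSup b.support = 0

/-!
Let `γ = ot b` and `α = log ω γ`, so that `ω ^ α` is the leading term of the Cantor normal form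
of `γ`. The initial subset of `supp b` of order type `ω ^ α` carries the first block; shifting it
by the supremum of its support makes it principal. The rest of `b` has order type `ρ` with
`ω ^ α + ρ = γ`, hence `ρ < γ` (since `γ < ω ^ α * ω`), and existence follows by induction on `γ`.

Conversely, in any normal form the later blocks have order type at most that of the first one,
`ω ^ β` say, and `ω ^ (β + 1)` is additively principal, so `ω ^ β ≤ γ < ω ^ (β + 1)`, i.e.
`β = α`. The support of the first block is an initial subset of `supp b`, and initial subsets of
a well-ordered set are determined by their order type; so the first block is determined by `b`,
and uniqueness follows by induction on the length.
-/

section OrderType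

variable {Γ : Type*} [LinearOrder Γ]

theorem orderTypeSet_congr {s t : Set Γ} (h : s = t) (hs : s.IsWF) (ht : t.IsWF) :
    orderTypeSet s hs = orderTypeSet t ht := by
  subst h; rfl

theorem orderTypeSet_eq_zero_iff {s : Set Γ} (hs : s.IsWF) : orderTypeSet s hs = 0 ↔ s = ∅ := by
  have : IsWellFounded s (· < ·) := ⟨hs⟩
  rw [orderTypeSet, Ordinal.type_eq_zero_iff_isEmpty, Set.isEmpty_coe_sort]

theorem orderTypeSet_mono {s t : Set Γ} (h : s ⊆ t) (ht : t.IsWF) :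
    orderTypeSet s (ht.mono h) ≤ orderTypeSet t ht := by
  have : IsWellFounded s (· < ·) := ⟨ht.mono h⟩
  have : IsWellFounded t (· < ·) := ⟨ht⟩
  exact RelEmbedding.ordinal_type_le ⟨⟨Set.inclusion h, Set.inclusion_injective h⟩, Iff.rfl⟩

theorem orderTypeSet_image {f : Γ → Γ} (hf : StrictMono f) {s : Set Γ} (hs : s.IsWF)
    (hfs : (f '' s).IsWF) : orderTypeSet (f '' s) hfs = orderTypeSet s hs := by
  have : IsWellFounded s (· < ·) := ⟨hs⟩
  have : IsWellFounded (f '' s) (· < ·) := ⟨hfs⟩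
  exact (Ordinal.type_eq.2 ⟨⟨Equiv.Set.image f s hf.injective, hf.lt_iff_lt⟩⟩).symm

theorem orderTypeSet_union {s t : Set Γ} (hs : s.IsWF) (ht : t.IsWF)
    (hst : ∀ a ∈ s, ∀ b ∈ t, a < b) :
    orderTypeSet (s ∪ t) (hs.union ht) = orderTypeSet s hs + orderTypeSet t ht := by
  have : IsWellFounded s (· < ·) := ⟨hs⟩
  have : IsWellFounded t (· < ·) := ⟨ht⟩
  have : IsWellFounded ↥(s ∪ t) (· < ·) := ⟨hs.union ht⟩
  classical
  have hdisj : Disjoint s t := Set.disjoint_left.2 fun a has hat => (hst a has a hat).false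
  unfold orderTypeSet
  rw [← Ordinal.type_sum_lex]
  refine Ordinal.type_eq.2 ⟨⟨Equiv.Set.union hdisj, ?_⟩⟩
  rintro ⟨a, ha | ha⟩ ⟨b, hb | hb⟩
  all_goals
    simp only [Equiv.Set.union_apply_left hdisj, Equiv.Set.union_apply_right hdisj, ha, hb,
      Sum.lex_inl_inl, Sum.lex_inr_inr, Sum.lex_inr_inl, Subtype.mk_lt_mk]
  · rfl
  · exact iff_of_true (Sum.Lex.sep _ _) (hst a ha b hb)
  · exact iff_of_false id (hst b hb a ha).not_gt
  · rfl

theorem orderTypeSet_sep_lt {s : Set Γ} (hs : s.IsWF) {m : Γ} (hm : m ∈ s) :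
    haveI : IsWellFounded s (· < ·) := ⟨hs⟩
    orderTypeSet {y ∈ s | y < m} (hs.mono (Set.sep_subset _ _)) =
      Ordinal.typein ((· < ·) : s → s → Prop) ⟨m, hm⟩ := by
  have : IsWellFounded s (· < ·) := ⟨hs⟩
  have : IsWellFounded {y ∈ s | y < m} (· < ·) := ⟨hs.mono (Set.sep_subset _ _)⟩
  rw [← Ordinal.type_subrel]
  exact Ordinal.type_eq.2 ⟨⟨⟨fun y => ⟨⟨y.1, y.2.1⟩, y.2.2⟩, fun z => ⟨z.1.1, z.1.2, z.2⟩,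
    fun _ => rfl, fun _ => rfl⟩, Iff.rfl⟩⟩

def IsInitialSubset (A s : Set Γ) : Prop :=
  A ⊆ s ∧ ∀ a ∈ A, ∀ z ∈ s, z ≤ a → z ∈ A

theorem IsInitialSubset.lt_of_mem_diff {A s : Set Γ} (h : IsInitialSubset A s) {a z : Γ}
    (ha : a ∈ A) (hz : z ∈ s \ A) : a < z :=
  lt_of_not_ge fun hza => hz.2 (h.2 a ha z hz.1 hza)

theorem IsInitialSubset.eq_sep_lt {A s : Set Γ} (h : IsInitialSubset A s) (hs : s.IsWF)
    (hne : (s \ A).Nonempty) : A = {y ∈ s | y < (hs.mono Set.sdiff_subset).min hne} := by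
  have hmin := (hs.mono Set.sdiff_subset).min_mem hne
  ext y
  refine ⟨fun hy => ⟨h.1 hy, h.lt_of_mem_diff hy hmin⟩, fun ⟨hys, hym⟩ => ?_⟩
  by_contra hyA
  exact (Set.IsWF.min_le _ hne ⟨hys, hyA⟩).not_gt hym

theorem IsInitialSubset.orderTypeSet_lt {A s : Set Γ} (h : IsInitialSubset A s) (hs : s.IsWF)
    (hne : A ≠ s) : orderTypeSet A (hs.mono h.1) < orderTypeSet s hs := by
  have : IsWellFounded s (· < ·) := ⟨hs⟩
  have hdiff : (s \ A).Nonempty := Set.sdiff_nonempty.2 fun hsA => hne (h.1.antisymm hsA)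
  have hmin := (hs.mono Set.sdiff_subset).min_mem hdiff
  rw [orderTypeSet_congr (h.eq_sep_lt hs hdiff) _ (hs.mono (Set.sep_subset _ _)),
    orderTypeSet_sep_lt hs hmin.1]
  exact Ordinal.typein_lt_type _ _

theorem IsInitialSubset.trans_subset {A B s : Set Γ} (hA : IsInitialSubset A s)
    (hB : IsInitialSubset B s) (hAB : A ⊆ B) : IsInitialSubset A B :=
  ⟨hAB, fun a ha z hz hza => hA.2 a ha z (hB.1 hz) hza⟩

theorem IsInitialSubset.subset_or_subset {A B s : Set Γ} (hA : IsInitialSubset A s)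
    (hB : IsInitialSubset B s) : A ⊆ B ∨ B ⊆ A := by
  by_contra! ⟨hAB, hBA⟩
  obtain ⟨a, haA, haB⟩ := Set.not_subset.1 hAB
  obtain ⟨b, hbB, hbA⟩ := Set.not_subset.1 hBA
  rcases le_total a b with hab | hba
  · exact haB (hB.2 b hbB a (hA.1 haA) hab)
  · exact hbA (hA.2 a haA b (hB.1 hbB) hba)

theorem IsInitialSubset.eq_of_orderTypeSet_eq {A B s : Set Γ} (hs : s.IsWF)
    (hA : IsInitialSubset A s) (hB : IsInitialSubset B s)
    (hAB : orderTypeSet A (hs.mono hA.1) = orderTypeSet B (hs.mono hB.1)) : A = B := by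
  by_contra hne
  rcases hA.subset_or_subset hB with h | h
  · exact (((hA.trans_subset hB h).orderTypeSet_lt (hs.mono hB.1) hne)).ne hAB
  · exact (((hB.trans_subset hA h).orderTypeSet_lt (hs.mono hA.1) (Ne.symm hne))).ne hAB.symm

theorem exists_isInitialSubset_orderTypeSet_eq {s : Set Γ} (hs : s.IsWF) {δ : Ordinal}
    (hδ : δ ≤ orderTypeSet s hs) :
    ∃ (A : Set Γ) (hA : IsInitialSubset A s), orderTypeSet A (hs.mono hA.1) = δ := by
  have : IsWellFounded s (· < ·) := ⟨hs⟩
  rcases hδ.lt_or_eq with hlt | rfl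
  · set m := Ordinal.enum ((· < ·) : s → s → Prop) ⟨δ, hlt⟩
    refine ⟨{y ∈ s | y < m}, ⟨Set.sep_subset _ _, fun a ha z hz hza => ⟨hz, hza.trans_lt ha.2⟩⟩,
      ?_⟩
    rw [orderTypeSet_sep_lt hs m.2]
    exact Ordinal.typein_enum _ hlt
  · exact ⟨s, ⟨subset_rfl, fun _ _ z hz _ => hz⟩, rfl⟩

end OrderType

theorem Ordinal.lt_of_omega0_opow_log_add_eq {γ ρ : Ordinal} (h : ω ^ log ω γ + ρ = γ) : ρ < γ := by
  refine (h ▸ le_add_self : ρ ≤ γ).lt_of_ne fun hργ => ?_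
  have hle := add_eq_right_iff_mul_omega0_le.1 (hργ ▸ h)
  rw [← opow_succ] at hle
  exact (lt_opow_succ_log_self one_lt_omega0 γ).not_ge hle

namespace HahnSeries

section PartialOrder

variable {Γ R : Type*} [PartialOrder Γ]

noncomputable def restrict [Zero R] (b : HahnSeries Γ R) (A : Set Γ) : HahnSeries Γ R where
  coeff := A.indicator b.coeff
  isPWO_support' := b.isPWO_support.mono (Set.support_indicator.trans_subset Set.inter_subset_right)

@[simp]
theorem coeff_restrict [Zero R] (b : HahnSeries Γ R) (A : Set Γ) :
    (b.restrict A).coeff = A.indicator b.coeff :=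
  rfl

theorem support_restrict [Zero R] (b : HahnSeries Γ R) (A : Set Γ) :
    (b.restrict A).support = A ∩ b.support :=
  Set.support_indicator

theorem restrict_add_restrict_compl [AddMonoid R] (b : HahnSeries Γ R) (A : Set Γ) :
    b.restrict A + b.restrict Aᶜ = b := by
  ext g
  exact Set.indicator_self_add_compl_apply A b.coeff g

theorem restrict_add_of_disjoint [AddMonoid R] {c d : HahnSeries Γ R}
    (h : Disjoint c.support d.support) : (c + d).restrict c.support = c := by
  ext g
  by_cases hg : g ∈ c.support
  · simp [hg, Function.notMem_support.1 (Set.disjoint_left.1 h hg)]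
  · simp [hg, Function.notMem_support.1 hg]

theorem restrict_compl_add_of_disjoint [AddMonoid R] {c d : HahnSeries Γ R}
    (h : Disjoint c.support d.support) : (c + d).restrict c.supportᶜ = d := by
  ext g
  by_cases hg : g ∈ c.support
  · simp [hg, Function.notMem_support.1 (Set.disjoint_left.1 h hg)]
  · simp [hg, Function.notMem_support.1 hg]

theorem support_add_of_disjoint [AddMonoid R] {b c : HahnSeries Γ R}
    (h : Disjoint b.support c.support) : (b + c).support = b.support ∪ c.support := by
  ext g
  by_cases hg : g ∈ b.support
  · simp [(mem_support _ _).1 hg, Function.notMem_support.1 (Set.disjoint_left.1 h hg)]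
  · simp [hg, Function.notMem_support.1 hg]

theorem support_sum_of_pairwise_disjoint [AddCommMonoid R] {ι : Type*} [Fintype ι]
    (f : ι → HahnSeries Γ R) (h : Pairwise fun i j => Disjoint (f i).support (f j).support) :
    (∑ i, f i).support = ⋃ i, (f i).support := by
  ext g
  simp only [mem_support, coeff_sum, Set.mem_iUnion]
  refine ⟨fun hg => ?_, fun ⟨i, hi⟩ => ?_⟩
  · obtain ⟨i, -, hi⟩ := Finset.exists_ne_zero_of_sum_ne_zero hg
    exact ⟨i, hi⟩
  · rwa [Finset.sum_eq_single i (fun j _ hji => Function.notMem_support.1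
      (Set.disjoint_left.1 (h hji.symm) hi)) (by simp)]

end PartialOrder

section LinearOrder

variable {Γ R : Type*} [LinearOrder Γ]

theorem ot_eq_zero_iff [Zero R] {b : HahnSeries Γ R} : b.ot = 0 ↔ b = 0 := by
  rw [ot, orderTypeSet_eq_zero_iff, support_eq_empty_iff]

theorem ot_le_ot_of_support_subset [Zero R] {b c : HahnSeries Γ R}
    (h : b.support ⊆ c.support) : b.ot ≤ c.ot :=
  orderTypeSet_mono h c.isWF_support

theorem ot_add_of_forall_lt [AddMonoid R] {b c : HahnSeries Γ R}
    (h : ∀ u ∈ b.support, ∀ v ∈ c.support, u < v) : (b + c).ot = b.ot + c.ot := by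
  have hdisj : Disjoint b.support c.support :=
    Set.disjoint_left.2 fun u hb hc => (h u hb u hc).false
  rw [ot, orderTypeSet_congr (support_add_of_disjoint hdisj) _
      (b.isWF_support.union c.isWF_support),
    orderTypeSet_union b.isWF_support c.isWF_support h, ot, ot]

theorem exists_leadingBlock [AddMonoid R] {b : HahnSeries Γ R} (hb : b ≠ 0) :
    ∃ c r : HahnSeries Γ R, c + r = b ∧ c.ot = ω ^ b.deg ∧ r.ot < b.ot ∧
      c.support ⊆ b.support ∧ r.support ⊆ b.support ∧ ∀ u ∈ c.support, ∀ v ∈ r.support, u < v := by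
  obtain ⟨A, hA, hAot⟩ := exists_isInitialSubset_orderTypeSet_eq b.isWF_support
    (opow_log_le_self ω (ot_eq_zero_iff.not.2 hb))
  have hc : (b.restrict A).support = A := by rw [support_restrict, Set.inter_eq_left.2 hA.1]
  have hr : (b.restrict Aᶜ).support = b.support \ A := by
    rw [support_restrict, Set.inter_comm, Set.sdiff_eq]
  have hcr : ∀ u ∈ (b.restrict A).support, ∀ v ∈ (b.restrict Aᶜ).support, u < v :=
    fun u hu v hv => hA.lt_of_mem_diff (hc ▸ hu) (hr ▸ hv)
  have hcot : (b.restrict A).ot = ω ^ b.deg := (orderTypeSet_congr hc _ _).trans hAot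
  refine ⟨b.restrict A, b.restrict Aᶜ, restrict_add_restrict_compl b A, hcot,
    Ordinal.lt_of_omega0_opow_log_add_eq ?_, hc.trans_subset hA.1,
    hr.trans_subset Set.sdiff_subset, hcr⟩
  rw [← deg, ← hcot, ← ot_add_of_forall_lt hcr, restrict_add_restrict_compl]

end LinearOrder

section SingleMul

variable {Γ R : Type*} [AddCommGroup Γ] [LinearOrder Γ] [IsOrderedAddMonoid Γ] [Semiring R]

theorem support_single_one_mul (x : Γ) (c : HahnSeries Γ R) :
    (single x 1 * c).support = (x + ·) '' c.support := by
  ext g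
  simp only [mem_support, coeff_single_mul, one_mul, Set.mem_image]
  exact ⟨fun hg => ⟨g - x, hg, add_sub_cancel x g⟩, fun ⟨u, hu, hg⟩ => by
    rwa [← hg, add_sub_cancel_left]⟩

theorem ot_single_one_mul (x : Γ) (c : HahnSeries Γ R) : (single x 1 * c).ot = c.ot := by
  have h := support_single_one_mul x c
  rw [ot, orderTypeSet_congr h _ (h ▸ (single x 1 * c).isWF_support), ot]
  exact orderTypeSet_image (fun _ _ h => add_lt_add_right h x) c.isWF_support _

theorem single_neg_one_mul_single_one_mul (x : Γ) (c : HahnSeries Γ R) :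
    single (-x) 1 * (single x 1 * c) = c := by
  rw [← mul_assoc, single_mul_single, neg_add_cancel, mul_one, single_zero_one, one_mul]

end SingleMul

theorem sSup_support_single_one_mul {R : Type*} [Semiring R] (x : ℝ) {c : HahnSeries ℝ R}
    (hne : c.support.Nonempty) (hbdd : BddAbove c.support) :
    sSup (single x 1 * c).support = x + sSup c.support := by
  rw [support_single_one_mul]
  exact ((OrderIso.addLeft x).map_csSup' hne hbdd).symm

end HahnSeries

theorem weaklyPrincipal.support_nonempty {Γ R : Type*} [LinearOrder Γ] [Zero R]
    {b : HahnSeries Γ R} (hb : weaklyPrincipal b) : b.support.Nonempty := by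
  obtain ⟨α, hα⟩ := hb
  refine HahnSeries.support_nonempty_iff.2 fun h0 => Ordinal.opow_ne_zero α omega0_ne_zero ?_
  rw [← hα, HahnSeries.ot_eq_zero_iff.2 h0]

theorem Fin.forall_lt_of_forall_zero_lt_of_forall_succ_lt {n : ℕ}
    {P : Fin (n + 1) → Fin (n + 1) → Prop} (h0 : ∀ j : Fin n, P 0 j.succ)
    (hs : ∀ i j : Fin n, i < j → P i.succ j.succ) : ∀ i j, i < j → P i j := by
  intro i j hij
  induction j using Fin.cases with
  | zero => exact absurd hij (Fin.not_lt_zero i)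
  | succ j =>
    induction i using Fin.cases with
    | zero => exact h0 j
    | succ i => exact hs i j (Fin.succ_lt_succ_iff.1 hij)

open HahnSeries

section Zero

variable {R : Type*} [Zero R]

structure IsNormalForm {n : ℕ} (x : Fin n → ℝ) (bs : Fin n → HahnSeries ℝ R) : Prop where
  monotone : Monotone x
  nonpos : ∀ i, x i ≤ 0
  support_nonpos : ∀ i, ∀ y ∈ (bs i).support, y ≤ 0
  principal : ∀ i, principalSeries (bs i)
  antitone_ot : Antitone fun i => (bs i).ot
  separated : ∀ i j, i < j → ∀ u ∈ (bs i).support, ∀ v ∈ (bs j).support, x i + u < x j + v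

theorem isNormalForm_zero (x : Fin 0 → ℝ) (bs : Fin 0 → HahnSeries ℝ R) : IsNormalForm x bs :=
  ⟨monotone_iff_forall_lt.2 fun i => i.elim0, fun i => i.elim0, fun i => i.elim0,
    fun i => i.elim0, antitone_iff_forall_lt.2 fun i => i.elim0, fun i => i.elim0⟩

theorem IsNormalForm.tail {n : ℕ} {x : Fin (n + 1) → ℝ} {bs : Fin (n + 1) → HahnSeries ℝ R}
    (h : IsNormalForm x bs) : IsNormalForm (Fin.tail x) (Fin.tail bs) :=
  ⟨h.monotone.comp (Fin.strictMono_succ.monotone), fun i => h.nonpos i.succ,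
    fun i => h.support_nonpos i.succ, fun i => h.principal i.succ,
    h.antitone_ot.comp_monotone (Fin.strictMono_succ.monotone),
    fun i j hij => h.separated i.succ j.succ (Fin.succ_lt_succ_iff.2 hij)⟩

end Zero

section Semiring

variable {R : Type*} [Semiring R]

theorem principalSeries.sSup_support_single_one_mul {b : HahnSeries ℝ R}
    (hp : principalSeries b) (hb : ∀ y ∈ b.support, y ≤ 0) (x : ℝ) :
    sSup (single x 1 * b).support = x := by
  rw [HahnSeries.sSup_support_single_one_mul x hp.1.support_nonempty ⟨0, hb⟩, hp.2, add_zero]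

theorem weaklyPrincipal.exists_principalSeries {c : HahnSeries ℝ R} (hc : weaklyPrincipal c)
    (hc0 : ∀ y ∈ c.support, y ≤ 0) :
    ∃ b₀, principalSeries b₀ ∧ (∀ y ∈ b₀.support, y ≤ 0) ∧
      single (sSup c.support) 1 * b₀ = c := by
  set x₀ := sSup c.support
  have hne := hc.support_nonempty
  refine ⟨single (-x₀) 1 * c, ⟨?_, ?_⟩, ?_, ?_⟩
  · rwa [weaklyPrincipal, ot_single_one_mul]
  · rw [sSup_support_single_one_mul _ hne ⟨0, hc0⟩, neg_add_cancel]
  · rw [support_single_one_mul]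
    rintro _ ⟨a, ha, rfl⟩
    linarith [le_csSup ⟨0, hc0⟩ ha]
  · simpa using single_neg_one_mul_single_one_mul (-x₀) c

noncomputable def normalFormSum {n : ℕ} (x : Fin n → ℝ) (bs : Fin n → HahnSeries ℝ R) :
    HahnSeries ℝ R :=
  ∑ i, single (x i) 1 * bs i

theorem normalFormSum_succ {n : ℕ} (x : Fin (n + 1) → ℝ) (bs : Fin (n + 1) → HahnSeries ℝ R) :
    normalFormSum x bs = single (x 0) 1 * bs 0 + normalFormSum (Fin.tail x) (Fin.tail bs) :=
  Fin.sum_univ_succ _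

namespace IsNormalForm

variable {n : ℕ} {x : Fin n → ℝ} {bs : Fin n → HahnSeries ℝ R}

theorem sSup_support_block (h : IsNormalForm x bs) (i : Fin n) :
    sSup (single (x i) 1 * bs i).support = x i :=
  (h.principal i).sSup_support_single_one_mul (h.support_nonpos i) (x i)

theorem block_lt (h : IsNormalForm x bs) {i j : Fin n} (hij : i < j) :
    ∀ u ∈ (single (x i) 1 * bs i).support, ∀ v ∈ (single (x j) 1 * bs j).support, u < v := by
  simp only [support_single_one_mul, Set.forall_mem_image]
  exact h.separated i j hij

theorem support_normalFormSum (h : IsNormalForm x bs) :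
    (normalFormSum x bs).support = ⋃ i, (single (x i) 1 * bs i).support := by
  refine support_sum_of_pairwise_disjoint _ fun i j hij => Set.disjoint_left.2 fun u hi hj => ?_
  rcases hij.lt_or_gt with hij | hij
  · exact (h.block_lt hij u hi u hj).false
  · exact (h.block_lt hij u hj u hi).false

theorem block_subset (h : IsNormalForm x bs) (i : Fin n) :
    (single (x i) 1 * bs i).support ⊆ (normalFormSum x bs).support :=
  h.support_normalFormSum ▸ Set.subset_iUnion (fun i => (single (x i) 1 * bs i).support) i

theorem cons {y : Fin n → ℝ} {cs : Fin n → HahnSeries ℝ R} (h : IsNormalForm y cs) {x₀ : ℝ}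
    {b₀ : HahnSeries ℝ R} (hx₀ : x₀ ≤ 0) (hb₀ : ∀ u ∈ b₀.support, u ≤ 0) (hp : principalSeries b₀)
    (hot : ∀ j, (cs j).ot ≤ b₀.ot)
    (hlt : ∀ u ∈ (single x₀ 1 * b₀).support, ∀ v ∈ (normalFormSum y cs).support, u < v) :
    IsNormalForm (Fin.cons x₀ y : Fin (n + 1) → ℝ) (Fin.cons b₀ cs : Fin (n + 1) → _) := by
  have hsep : ∀ j, ∀ u ∈ b₀.support, ∀ v ∈ (cs j).support, x₀ + u < y j + v :=
    fun j u hu v hv => hlt _ (support_single_one_mul x₀ b₀ ▸ Set.mem_image_of_mem _ hu) _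
      (h.block_subset j (support_single_one_mul (y j) (cs j) ▸ Set.mem_image_of_mem _ hv))
  have hle : ∀ j, x₀ ≤ y j := by
    intro j
    obtain ⟨v, hv⟩ := (h.principal j).1.support_nonempty
    obtain ⟨u, hu⟩ := hp.1.support_nonempty
    have : x₀ ≤ y j + v := by
      rw [← hp.sSup_support_single_one_mul hb₀ x₀, support_single_one_mul]
      exact csSup_le ⟨_, Set.mem_image_of_mem _ hu⟩
        fun _ ⟨u', hu', hu'v⟩ => hu'v ▸ (hsep j u' hu' v hv).le
    linarith [h.support_nonpos j v hv]
  refine ⟨monotone_iff_forall_lt.2 (Fin.forall_lt_of_forall_zero_lt_of_forall_succ_lt hle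
      fun i j hij => h.monotone hij.le), fun i => Fin.cases hx₀ h.nonpos i,
    fun i => Fin.cases hb₀ h.support_nonpos i, fun i => Fin.cases hp h.principal i,
    antitone_iff_forall_lt.2 (Fin.forall_lt_of_forall_zero_lt_of_forall_succ_lt hot
      fun i j hij => h.antitone_ot hij.le),
    Fin.forall_lt_of_forall_zero_lt_of_forall_succ_lt hsep fun i j hij => h.separated i j hij⟩

theorem head_lt_tail {x : Fin (n + 1) → ℝ} {bs : Fin (n + 1) → HahnSeries ℝ R}
    (h : IsNormalForm x bs) : ∀ u ∈ (single (x 0) 1 * bs 0).support,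
      ∀ v ∈ (normalFormSum (Fin.tail x) (Fin.tail bs)).support, u < v := by
  intro u hu v hv
  rw [h.tail.support_normalFormSum, Set.mem_iUnion] at hv
  obtain ⟨j, hj⟩ := hv
  exact h.block_lt (Fin.succ_pos j) u hu v hj

theorem ot_normalFormSum_lt {n : ℕ} {x : Fin n → ℝ} {bs : Fin n → HahnSeries ℝ R}
    (h : IsNormalForm x bs) {α : Ordinal} (hα : ∀ i, (bs i).ot ≤ ω ^ α) :
    (normalFormSum x bs).ot < ω ^ (α + 1) := by
  induction n with
  | zero =>
    rw [normalFormSum, Finset.univ_eq_empty, Finset.sum_empty, ot_eq_zero_iff.2 rfl]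
    exact opow_pos _ omega0_pos
  | succ n ih =>
    rw [normalFormSum_succ, ot_add_of_forall_lt h.head_lt_tail, ot_single_one_mul]
    exact isPrincipal_add_omega0_opow (α + 1)
      ((hα 0).trans_lt ((opow_lt_opow_iff_right one_lt_omega0).2 (lt_add_one α)))
      (ih h.tail fun i => hα i.succ)

theorem ot_head {x : Fin (n + 1) → ℝ} {bs : Fin (n + 1) → HahnSeries ℝ R}
    (h : IsNormalForm x bs) : (bs 0).ot = ω ^ (normalFormSum x bs).deg := by
  obtain ⟨α, hα⟩ := (h.principal 0).1
  have hlow : ω ^ α ≤ (normalFormSum x bs).ot := by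
    rw [normalFormSum_succ, ot_add_of_forall_lt h.head_lt_tail, ot_single_one_mul, hα]
    exact le_self_add
  have hup := h.ot_normalFormSum_lt fun i => (h.antitone_ot (Fin.zero_le i)).trans hα.le
  rw [hα, deg, (log_eq_iff one_lt_omega0 ((opow_pos α omega0_pos).trans_le hlow).ne' α).2
    ⟨hlow, hup⟩]

section Head

variable {x : Fin (n + 1) → ℝ} {bs : Fin (n + 1) → HahnSeries ℝ R}

theorem isInitialSubset_head (h : IsNormalForm x bs) :
    IsInitialSubset (single (x 0) 1 * bs 0).support (normalFormSum x bs).support := by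
  refine ⟨h.block_subset 0, fun a ha z hz hza => ?_⟩
  rw [h.support_normalFormSum, Set.mem_iUnion] at hz
  obtain ⟨j, hj⟩ := hz
  induction j using Fin.cases with
  | zero => exact hj
  | succ j => exact absurd hza (h.block_lt (Fin.succ_pos j) a ha z hj).not_ge

theorem disjoint_head_tail (h : IsNormalForm x bs) :
    Disjoint (single (x 0) 1 * bs 0).support (normalFormSum (Fin.tail x) (Fin.tail bs)).support :=
  Set.disjoint_left.2 fun u hu hv => (h.head_lt_tail u hu u hv).false

theorem restrict_support_head (h : IsNormalForm x bs) :
    (normalFormSum x bs).restrict (single (x 0) 1 * bs 0).support = single (x 0) 1 * bs 0 := by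
  rw [normalFormSum_succ]
  exact restrict_add_of_disjoint h.disjoint_head_tail

theorem restrict_compl_support_head (h : IsNormalForm x bs) :
    (normalFormSum x bs).restrict (single (x 0) 1 * bs 0).supportᶜ =
      normalFormSum (Fin.tail x) (Fin.tail bs) := by
  rw [normalFormSum_succ]
  exact restrict_compl_add_of_disjoint h.disjoint_head_tail

theorem support_head_eq {n' : ℕ} {x' : Fin (n' + 1) → ℝ} {bs' : Fin (n' + 1) → HahnSeries ℝ R}
    (h : IsNormalForm x bs) (h' : IsNormalForm x' bs')
    (heq : normalFormSum x bs = normalFormSum x' bs') :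
    (single (x 0) 1 * bs 0).support = (single (x' 0) 1 * bs' 0).support := by
  refine IsInitialSubset.eq_of_orderTypeSet_eq (normalFormSum x bs).isWF_support
    h.isInitialSubset_head (heq ▸ h'.isInitialSubset_head) ?_
  change (single (x 0) 1 * bs 0).ot = (single (x' 0) 1 * bs' 0).ot
  rw [ot_single_one_mul, ot_single_one_mul, h.ot_head, h'.ot_head, heq]

end Head

theorem normalFormSum_ne_zero {x : Fin (n + 1) → ℝ} {bs : Fin (n + 1) → HahnSeries ℝ R}
    (h : IsNormalForm x bs) : normalFormSum x bs ≠ 0 := by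
  rw [← support_nonempty_iff]
  obtain ⟨u, hu⟩ := (h.principal 0).1.support_nonempty
  exact ⟨_, h.block_subset 0 (support_single_one_mul (x 0) (bs 0) ▸ Set.mem_image_of_mem _ hu)⟩

theorem eq_of_normalFormSum_eq {n n' : ℕ} {x : Fin n → ℝ} {bs : Fin n → HahnSeries ℝ R}
    {x' : Fin n' → ℝ} {bs' : Fin n' → HahnSeries ℝ R} (h : IsNormalForm x bs)
    (h' : IsNormalForm x' bs') (heq : normalFormSum x bs = normalFormSum x' bs') :
    (⟨n, x, bs⟩ : Σ n : ℕ, (Fin n → ℝ) × (Fin n → HahnSeries ℝ R)) = ⟨n', x', bs'⟩ := by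
  induction n generalizing n' with
  | zero =>
    cases n' with
    | zero => congr 2 <;> exact Subsingleton.elim _ _
    | succ n' => exact absurd heq.symm h'.normalFormSum_ne_zero
  | succ n ih =>
    cases n' with
    | zero => exact absurd heq h.normalFormSum_ne_zero
    | succ n' =>
      have hS := h.support_head_eq h' heq
      have hhead : single (x 0) 1 * bs 0 = single (x' 0) 1 * bs' 0 := by
        rw [← h.restrict_support_head, ← h'.restrict_support_head, hS, heq]
      have hx : x 0 = x' 0 := by
        rw [← h.sSup_support_block, ← h'.sSup_support_block, hhead]
      have hbs : bs 0 = bs' 0 := by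
        rw [← single_neg_one_mul_single_one_mul (x 0) (bs 0), hhead, hx,
          single_neg_one_mul_single_one_mul]
      have htail : normalFormSum (Fin.tail x) (Fin.tail bs) =
          normalFormSum (Fin.tail x') (Fin.tail bs') := by
        rw [← h.restrict_compl_support_head, ← h'.restrict_compl_support_head, hS, heq]
      obtain ⟨rfl, hrest⟩ := Sigma.mk.inj_iff.1 (ih h.tail h'.tail htail)
      obtain ⟨hxt, hbst⟩ : Fin.tail x = Fin.tail x' ∧ Fin.tail bs = Fin.tail bs' :=
        Prod.ext_iff.1 (eq_of_heq hrest)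
      rw [← Fin.cons_self_tail x, ← Fin.cons_self_tail bs, hx, hbs, hxt, hbst,
        Fin.cons_self_tail, Fin.cons_self_tail]

end IsNormalForm

end Semiring

theorem exists_isNormalForm {R : Type*} [Semiring R] (b : HahnSeries ℝ R)
    (hb : ∀ y ∈ b.support, y ≤ 0) : ∃ (n : ℕ) (x : Fin n → ℝ) (bs : Fin n → HahnSeries ℝ R),
      IsNormalForm x bs ∧ normalFormSum x bs = b := by
  by_cases hb0 : b = 0
  · exact ⟨0, Fin.elim0, Fin.elim0, isNormalForm_zero _ _, by simp [normalFormSum, hb0]⟩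
  obtain ⟨c, r, hcrb, hcot, hrlt, hcb, hrb, hcr⟩ := exists_leadingBlock hb0
  obtain ⟨n, y, cs, hnf, hsum⟩ := exists_isNormalForm r fun v hv => hb v (hrb hv)
  have hcw : weaklyPrincipal c := ⟨b.deg, hcot⟩
  have hc0 : ∀ u ∈ c.support, u ≤ 0 := fun u hu => hb u (hcb hu)
  obtain ⟨b₀, hp, hb₀, hcb₀⟩ := hcw.exists_principalSeries hc0
  refine ⟨n + 1, Fin.cons (sSup c.support) y, Fin.cons b₀ cs,
    hnf.cons (csSup_le hcw.support_nonempty hc0) hb₀ hp (fun j => ?_) (by rwa [hcb₀, hsum]), ?_⟩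
  · obtain ⟨β, hβ⟩ := (hnf.principal j).1
    have hcs : (cs j).ot ≤ b.ot := by
      rw [← ot_single_one_mul (y j)]
      exact (ot_le_ot_of_support_subset (hsum ▸ hnf.block_subset j)).trans hrlt.le
    rw [← ot_single_one_mul (sSup c.support) b₀, hcb₀, hcot, hβ]
    exact opow_le_opow_right omega0_pos (le_log_of_opow_le one_lt_omega0 (hβ ▸ hcs))
  · rw [normalFormSum_succ, Fin.cons_zero, Fin.cons_zero, Fin.tail_cons, Fin.tail_cons, hcb₀,
      hsum, hcrb]
termination_by b.ot

/-- Every nonzero `b ∈ K((ℝ≤0))` has a unique normal form: unique `n ≥ 1`, reals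
`x₁ ≤ … ≤ xₙ ≤ 0` and series `b₁, …, bₙ ∈ K((ℝ≤0))`, each `bᵢ` principal,
`ot b₁ ≥ … ≥ ot bₙ`, every element of `xᵢ + supp bᵢ` strictly below every element
of `x_{i+1} + supp b_{i+1}`, and `b = b₁ t^{x₁} + … + bₙ t^{xₙ}`. -/
theorem normal_form {K : Type*} [Field K]
    (b : HahnSeries ℝ K) (hb0 : b ≠ 0) (hb : ∀ x ∈ b.support, x ≤ 0) :
    ∃! nf : Σ n : ℕ, (Fin n → ℝ) × (Fin n → HahnSeries ℝ K),
      1 ≤ nf.1 ∧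
      (∀ i j : Fin nf.1, i ≤ j → nf.2.1 i ≤ nf.2.1 j) ∧
      (∀ i, nf.2.1 i ≤ 0) ∧
      (∀ i, (∀ x ∈ (nf.2.2 i).support, x ≤ 0) ∧ principalSeries (nf.2.2 i)) ∧
      (∀ i j : Fin nf.1, i ≤ j → (nf.2.2 j).ot ≤ (nf.2.2 i).ot) ∧
      (∀ i j : Fin nf.1, i < j →
        ∀ x ∈ (nf.2.2 i).support, ∀ y ∈ (nf.2.2 j).support,
          nf.2.1 i + x < nf.2.1 j + y) ∧
      ∑ i, HahnSeries.single (nf.2.1 i) (1 : K) * nf.2.2 i = b := by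
  obtain ⟨n, x, bs, hnf, hsum⟩ := exists_isNormalForm b hb
  have hn : 1 ≤ n := Nat.one_le_iff_ne_zero.2 fun hn0 => hb0 <| by
    subst hn0
    simp [← hsum, normalFormSum]
  refine ⟨⟨n, x, bs⟩, ⟨hn, fun i j hij => hnf.monotone hij, hnf.nonpos,
    fun i => ⟨hnf.support_nonpos i, hnf.principal i⟩, fun i j hij => hnf.antitone_ot hij,
    hnf.separated, hsum⟩, ?_⟩
  rintro ⟨n', x', bs'⟩ ⟨-, hmono', hnonpos', hprin', hot', hsep', hsum'⟩
  have hnf' : IsNormalForm x' bs' := ⟨fun i j => hmono' i j, hnonpos', fun i => (hprin' i).1,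
    fun i => (hprin' i).2, fun i j => hot' i j, hsep'⟩
  exact hnf'.eq_of_normalFormSum_eq hnf (hsum'.trans hsum.symm)
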